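/- Let n ≥ 1 and let H ∈ ℂ[x,y] be a balanced polynomial of degree n+1. Then every polynomial F ∈ ℂ[x,y] with deg F ≤ 3n − 2 can be written as F = H_x·v − H_y·u + r with u, v, r ∈ ℂ[x,y], deg r ≤ 2n − 2, and ‖u‖ + ‖v‖ + ‖r‖ ≤ (n+1)^{n+1}·‖F‖. -/

import Mathlib

open MvPolynomial Finset

/-- The ℓ¹-norm of a bivariate complex polynomial: the sum of the absolute
values of all its coefficients. -/
noncomputable def l1mv (p : MvPolynomial (Fin 2) ℂ) : ℝ :=
  ∑ m ∈ p.support, ‖MvPolynomial.coeff m p‖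

lemma l1mv_eq_sum (p : MvPolynomial (Fin 2) ℂ) {s : Finset ((Fin 2) →₀ ℕ)}
    (h : p.support ⊆ s) : l1mv p = ∑ m ∈ s, ‖p.coeff m‖ := by
  refine Finset.sum_subset h fun m _ hm => ?_
  simp [MvPolynomial.notMem_support_iff.mp hm]

lemma l1mv_nonneg (p : MvPolynomial (Fin 2) ℂ) : 0 ≤ l1mv p :=
  Finset.sum_nonneg fun _ _ => norm_nonneg _

@[simp] lemma l1mv_zero : l1mv (0 : MvPolynomial (Fin 2) ℂ) = 0 := by
  simp [l1mv]

lemma l1mv_monomial (m : (Fin 2) →₀ ℕ) (c : ℂ) :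
    l1mv (monomial m c) = ‖c‖ := by
  by_cases hc : c = 0
  · simp [hc]
  · rw [l1mv_eq_sum _ (s := {m}) (by simp [support_monomial, hc])]
    simp

lemma l1mv_add_le (p q : MvPolynomial (Fin 2) ℂ) : l1mv (p + q) ≤ l1mv p + l1mv q := by
  rw [l1mv_eq_sum (p + q) (s := p.support ∪ q.support) (support_add),
    l1mv_eq_sum p (s := p.support ∪ q.support) (Finset.subset_union_left),
    l1mv_eq_sum q (s := p.support ∪ q.support) (Finset.subset_union_right),
    ← Finset.sum_add_distrib]
  exact Finset.sum_le_sum fun m _ => by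
    simpa [coeff_add] using norm_add_le _ _

lemma l1mv_smul (c : ℂ) (p : MvPolynomial (Fin 2) ℂ) :
    l1mv (c • p) = ‖c‖ * l1mv p := by
  rw [l1mv_eq_sum (c • p) (s := p.support) (support_smul), l1mv, Finset.mul_sum]
  exact Finset.sum_congr rfl fun m _ => by simp [coeff_smul, smul_eq_mul]

lemma l1mv_sum_le {ι : Type*} (s : Finset ι) (f : ι → MvPolynomial (Fin 2) ℂ) :
    l1mv (∑ i ∈ s, f i) ≤ ∑ i ∈ s, l1mv (f i) := by
  classical
  induction s using Finset.cons_induction with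
  | empty => simp
  | cons i s hi ih =>
    rw [Finset.sum_cons, Finset.sum_cons]
    exact le_trans (l1mv_add_le _ _) (by linarith)

lemma l1mv_mul_le (p q : MvPolynomial (Fin 2) ℂ) : l1mv (p * q) ≤ l1mv p * l1mv q := by
  conv_lhs => rw [p.as_sum, q.as_sum, Finset.sum_mul_sum]
  refine le_trans (l1mv_sum_le _ _) ?_
  rw [l1mv, l1mv, Finset.sum_mul_sum]
  refine Finset.sum_le_sum fun a _ => le_trans (l1mv_sum_le _ _) ?_
  refine Finset.sum_le_sum fun b _ => ?_
  rw [monomial_mul, l1mv_monomial, norm_mul]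

lemma l1mv_neg (p : MvPolynomial (Fin 2) ℂ) : l1mv (-p) = l1mv p := by
  simpa [l1mv_smul] using l1mv_smul (-1) p

lemma fin2_sum (m : Fin 2 →₀ ℕ) : (m.sum fun _ e => e) = m 0 + m 1 := by
  rw [Finsupp.sum_fintype _ _ (fun _ => rfl), Fin.sum_univ_two]

lemma fin2_degree (m : Fin 2 →₀ ℕ) : m.degree = m 0 + m 1 := by
  rw [Finsupp.degree, ← fin2_sum]; rfl

lemma totalDegree_le_iff' {p : MvPolynomial (Fin 2) ℂ} {d : ℕ}
    (h : ∀ m ∈ p.support, (m.sum fun _ e => e) ≤ d) : p.totalDegree ≤ d :=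
  Finset.sup_le h

lemma comp_i_le_sum (m : Fin 2 →₀ ℕ) (i : Fin 2) : m i ≤ m.sum fun _ e => e := by
  by_cases h : i ∈ m.support
  · exact Finset.single_le_sum (f := fun a => m a) (fun _ _ => Nat.zero_le _) h
  · simp [Finsupp.notMem_support_iff.mp h]

/-- norm bound for pderiv -/
lemma l1mv_pderiv_le {p : MvPolynomial (Fin 2) ℂ} {d : ℕ} (hd : p.totalDegree ≤ d)
    (i : Fin 2) : l1mv (pderiv i p) ≤ (d : ℝ) * l1mv p := by
  conv_lhs => rw [p.as_sum, map_sum]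
  refine le_trans (l1mv_sum_le _ _) ?_
  rw [l1mv, Finset.mul_sum]
  refine Finset.sum_le_sum fun m hm => ?_
  rw [pderiv_monomial, l1mv_monomial, norm_mul, Complex.norm_natCast]
  have h1 : (m i : ℝ) ≤ (d : ℝ) := by
    exact_mod_cast le_trans (comp_i_le_sum m i) (le_trans (le_totalDegree hm) hd)
  have := norm_nonneg (p.coeff m)
  nlinarith

/-- degree bound for pderiv -/
lemma totalDegree_pderiv_le {p : MvPolynomial (Fin 2) ℂ} {d : ℕ} (hd : p.totalDegree ≤ d)
    (i : Fin 2) : (pderiv i p).totalDegree ≤ d - 1 := by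
  conv_lhs => rw [p.as_sum, map_sum]
  refine le_trans (totalDegree_finset_sum _ _) (Finset.sup_le fun m hm => ?_)
  rw [pderiv_monomial]
  by_cases hmi : m i = 0
  · simp [hmi]
  refine le_trans (totalDegree_monomial_le _ _) ?_
  have hm2 : (m.sum fun _ e => e) ≤ d := le_trans (le_totalDegree hm) hd
  rw [fin2_sum] at hm2
  have key : ((m - Finsupp.single i (1:ℕ)).sum fun _ e => id e) =
      (m 0 - Finsupp.single i (1:ℕ) 0) + (m 1 - Finsupp.single i (1:ℕ) 1) := by
    simp only [id_eq]
    rw [fin2_sum (m - Finsupp.single i (1:ℕ)), Finsupp.tsub_apply, Finsupp.tsub_apply]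
  rw [key]
  have hi0 : i = 0 ∨ i = 1 := by omega
  rcases hi0 with h | h <;> subst h <;> simp [Finsupp.single_apply] <;> omega

/-- A pair of homogeneous polynomials `a, b ∈ ℂ[x,y]` of degree `n` is
normalized if every homogeneous polynomial `f` of degree `2n - 1` can be
written `f = a·u + b·v` with homogeneous `u, v` of degree `n - 1` satisfying
`‖u‖ + ‖v‖ ≤ ‖f‖`. -/
def NormalizedPair (n : ℕ) (a b : MvPolynomial (Fin 2) ℂ) : Prop :=
  a.IsHomogeneous n ∧ b.IsHomogeneous n ∧
    ∀ f : MvPolynomial (Fin 2) ℂ, f.IsHomogeneous (2 * n - 1) →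
      ∃ u v : MvPolynomial (Fin 2) ℂ, u.IsHomogeneous (n - 1) ∧ v.IsHomogeneous (n - 1) ∧
        f = a * u + b * v ∧ l1mv u + l1mv v ≤ l1mv f

/-- A polynomial `H` of degree `n+1` is quasimonic (normalized at infinity) if
the pair of partial derivatives of its principal homogeneous part `Ĥ` is
normalized. -/
def Quasimonic (n : ℕ) (H : MvPolynomial (Fin 2) ℂ) : Prop :=
  NormalizedPair n (pderiv 0 (homogeneousComponent (n + 1) H))
    (pderiv 1 (homogeneousComponent (n + 1) H))

/-- A polynomial `H` of degree `n+1` is balanced if it is quasimonic and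
`‖H − Ĥ‖ ≤ 1`. -/
def IsBalanced (n : ℕ) (H : MvPolynomial (Fin 2) ℂ) : Prop :=
  Quasimonic n H ∧ l1mv (H - homogeneousComponent (n + 1) H) ≤ 1

lemma monomial_div {n : ℕ} (hn : 1 ≤ n) {a b : MvPolynomial (Fin 2) ℂ}
    (hpair : NormalizedPair n a b) (m : Fin 2 →₀ ℕ) (hm : 2*n - 1 ≤ m.sum fun _ e => e) :
    ∃ u v : MvPolynomial (Fin 2) ℂ, (monomial m (1:ℂ)) = a*u + b*v ∧
      u.totalDegree ≤ (m.sum fun _ e => e) - n ∧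
      v.totalDegree ≤ (m.sum fun _ e => e) - n ∧ l1mv u + l1mv v ≤ 1 := by
  set D := m.sum fun _ e => e with hD
  have hDm : D = m 0 + m 1 := fin2_sum m
  set k := min (m 0) (2*n - 1) with hk
  set m₂ : Fin 2 →₀ ℕ := Finsupp.single 0 k + Finsupp.single 1 (2*n - 1 - k) with hm₂
  have hm₂0 : m₂ 0 = k := by simp [hm₂, Finsupp.single_apply]
  have hm₂1 : m₂ 1 = 2*n - 1 - k := by simp [hm₂, Finsupp.single_apply]
  have hle : m₂ ≤ m := by
    rw [Finsupp.le_def]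
    intro i
    have hi0 : i = 0 ∨ i = 1 := by omega
    rcases hi0 with h | h <;> subst h
    · rw [hm₂0]; omega
    · rw [hm₂1]; omega
  have hdeg2 : m₂.degree = 2*n - 1 := by rw [fin2_degree, hm₂0, hm₂1]; omega
  obtain ⟨u₂, v₂, hu₂, hv₂, heq, hnorm⟩ :=
    hpair.2.2 (monomial m₂ 1) (isHomogeneous_monomial _ hdeg2)
  set m₁ : Fin 2 →₀ ℕ := m - m₂ with hm₁
  have hm₁sum : (m₁.sum fun _ e => e) = D - (2*n - 1) := by
    rw [fin2_sum, hm₁, Finsupp.tsub_apply, Finsupp.tsub_apply, hm₂0, hm₂1, hDm]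
    have := Finsupp.le_def.mp hle 0
    have := Finsupp.le_def.mp hle 1
    rw [hm₂0] at *; rw [hm₂1] at *
    omega
  have hsplit : (monomial m (1:ℂ)) = monomial m₁ 1 * monomial m₂ 1 := by
    rw [monomial_mul, mul_one]
    congr 1
    rw [hm₁, tsub_add_cancel_of_le hle]
  refine ⟨monomial m₁ 1 * u₂, monomial m₁ 1 * v₂, ?_, ?_, ?_, ?_⟩
  · rw [hsplit, heq]; ring
  · refine le_trans (totalDegree_mul _ _) ?_
    rw [totalDegree_monomial _ (one_ne_zero), hm₁sum]
    have := hu₂.totalDegree_le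
    omega
  · refine le_trans (totalDegree_mul _ _) ?_
    rw [totalDegree_monomial _ (one_ne_zero), hm₁sum]
    have := hv₂.totalDegree_le
    omega
  · rw [l1mv_monomial] at hnorm
    simp only [norm_one] at hnorm
    calc l1mv (monomial m₁ 1 * u₂) + l1mv (monomial m₁ 1 * v₂)
        ≤ l1mv (monomial m₁ 1) * l1mv u₂ + l1mv (monomial m₁ 1) * l1mv v₂ :=
          add_le_add (l1mv_mul_le _ _) (l1mv_mul_le _ _)
      _ ≤ 1 := by rw [l1mv_monomial]; simp only [norm_one, one_mul]; exact hnorm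

lemma div_high {n : ℕ} (hn : 1 ≤ n) {a b : MvPolynomial (Fin 2) ℂ}
    (hpair : NormalizedPair n a b) {p : MvPolynomial (Fin 2) ℂ} {D : ℕ}
    (hp : ∀ m ∈ p.support, 2*n - 1 ≤ m.sum fun _ e => e) (hD : p.totalDegree ≤ D) :
    ∃ U V : MvPolynomial (Fin 2) ℂ, p = a*U + b*V ∧
      U.totalDegree ≤ D - n ∧ V.totalDegree ≤ D - n ∧ l1mv U + l1mv V ≤ l1mv p := by
  classical
  set u : (Fin 2 →₀ ℕ) → MvPolynomial (Fin 2) ℂ := fun m =>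
    if h : 2*n - 1 ≤ m.sum fun _ e => e then (monomial_div hn hpair m h).choose else 0 with hu
  set v : (Fin 2 →₀ ℕ) → MvPolynomial (Fin 2) ℂ := fun m =>
    if h : 2*n - 1 ≤ m.sum fun _ e => e then
      (monomial_div hn hpair m h).choose_spec.choose else 0 with hv
  have hspec : ∀ m ∈ p.support, (monomial m (1:ℂ)) = a * u m + b * v m ∧
      (u m).totalDegree ≤ (m.sum fun _ e => e) - n ∧
      (v m).totalDegree ≤ (m.sum fun _ e => e) - n ∧ l1mv (u m) + l1mv (v m) ≤ 1 := by
    intro m hm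
    have h := hp m hm
    have := (monomial_div hn hpair m h).choose_spec.choose_spec
    simp only [hu, hv, dif_pos h]
    exact this
  refine ⟨∑ m ∈ p.support, p.coeff m • u m, ∑ m ∈ p.support, p.coeff m • v m, ?_, ?_, ?_, ?_⟩
  · conv_lhs => rw [p.as_sum]
    rw [Finset.mul_sum, Finset.mul_sum, ← Finset.sum_add_distrib]
    refine Finset.sum_congr rfl fun m hm => ?_
    have h1 : (monomial m (p.coeff m)) = p.coeff m • monomial m (1:ℂ) := by
      rw [smul_monomial, smul_eq_mul, mul_one]
    rw [h1, (hspec m hm).1, smul_add, mul_smul_comm, mul_smul_comm]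
  · refine le_trans (totalDegree_finset_sum _ _) (Finset.sup_le fun m hm => ?_)
    refine le_trans (totalDegree_smul_le _ _) (le_trans (hspec m hm).2.1 ?_)
    exact Nat.sub_le_sub_right (le_trans (le_totalDegree hm) hD) n
  · refine le_trans (totalDegree_finset_sum _ _) (Finset.sup_le fun m hm => ?_)
    refine le_trans (totalDegree_smul_le _ _) (le_trans (hspec m hm).2.2.1 ?_)
    exact Nat.sub_le_sub_right (le_trans (le_totalDegree hm) hD) n
  · calc l1mv (∑ m ∈ p.support, p.coeff m • u m) + l1mv (∑ m ∈ p.support, p.coeff m • v m)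
        ≤ (∑ m ∈ p.support, l1mv (p.coeff m • u m)) +
            ∑ m ∈ p.support, l1mv (p.coeff m • v m) :=
          add_le_add (l1mv_sum_le _ _) (l1mv_sum_le _ _)
      _ = ∑ m ∈ p.support, ‖p.coeff m‖ * (l1mv (u m) + l1mv (v m)) := by
          rw [← Finset.sum_add_distrib]
          exact Finset.sum_congr rfl fun m _ => by rw [l1mv_smul, l1mv_smul]; ring
      _ ≤ ∑ m ∈ p.support, ‖p.coeff m‖ * 1 := by
          refine Finset.sum_le_sum fun m hm => ?_
          exact mul_le_mul_of_nonneg_left (hspec m hm).2.2.2 (norm_nonneg _)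
      _ = l1mv p := by simp [l1mv]

lemma totalDegree_neg' (p : MvPolynomial (Fin 2) ℂ) : (-p).totalDegree = p.totalDegree := by
  simp [totalDegree, support_neg]

lemma real_step {N Pk x y U V A s : ℝ} (hN : 1 ≤ N) (hpow : 1 ≤ Pk)
    (hx : 0 ≤ x) (hU : 0 ≤ U) (hV : 0 ≤ V) (hUV : U + V ≤ y) (hxy : x + y ≤ A)
    (hs : s ≤ (2*Pk - 1) * (x + N*(U+V))) :
    s + (U + V) ≤ (2*(Pk*(N+1)) - 1) * A := by
  have hy : 0 ≤ y := le_trans (by linarith) hUV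
  have hC1 : (0:ℝ) ≤ 2*Pk - 1 := by linarith
  have expand : (2*Pk - 1)*(x + N*(U+V)) = (2*Pk - 1)*x + ((2*Pk - 1)*N)*(U+V) := by ring
  have t2 : ((2*Pk - 1)*N + 1)*(U+V) ≤ ((2*Pk - 1)*N + 1)*y :=
    mul_le_mul_of_nonneg_left hUV (by nlinarith)
  have t3 : (2*Pk - 1)*x ≤ (2*(Pk*(N+1)) - 1)*x := mul_le_mul_of_nonneg_right (by nlinarith) hx
  have t4 : ((2*Pk - 1)*N + 1) ≤ (2*(Pk*(N+1)) - 1) := by nlinarith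
  have t5 : ((2*Pk - 1)*N + 1)*y ≤ (2*(Pk*(N+1)) - 1)*y := mul_le_mul_of_nonneg_right t4 hy
  have t6 : (2*(Pk*(N+1)) - 1)*x + (2*(Pk*(N+1)) - 1)*y ≤ (2*(Pk*(N+1)) - 1)*A := by
    rw [← mul_add]; exact mul_le_mul_of_nonneg_left hxy (by nlinarith)
  nlinarith


set_option maxHeartbeats 2000000 in
lemma main_ind {n : ℕ} (hn : 1 ≤ n) {a b P Q p q : MvPolynomial (Fin 2) ℂ}
    (hpair : NormalizedPair n a b)
    (hP : P = a + p) (hQ : Q = b + q)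
    (hpd : p.totalDegree ≤ n - 1) (hqd : q.totalDegree ≤ n - 1)
    (hpn : l1mv p ≤ n) (hqn : l1mv q ≤ n) :
    ∀ k (F : MvPolynomial (Fin 2) ℂ), F.totalDegree ≤ 2*n - 2 + k →
      ∃ u v r : MvPolynomial (Fin 2) ℂ, r.totalDegree ≤ 2*n - 2 ∧ F = P * v - Q * u + r ∧
        l1mv u + l1mv v + l1mv r ≤ (2 * ((n:ℝ)+1)^k - 1) * l1mv F := by
  intro k
  induction k with
  | zero =>
    intro F hF
    refine ⟨0, 0, F, by simpa using hF, by ring, ?_⟩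
    simp only [l1mv_zero, pow_zero, mul_one]
    nlinarith [l1mv_nonneg F]
  | succ k ih =>
    intro F hF
    classical
    set S : Finset (Fin 2 →₀ ℕ) := F.support.filter (fun m => 2*n - 1 ≤ m.sum fun _ e => e)
      with hS
    set Fhigh : MvPolynomial (Fin 2) ℂ := ∑ m ∈ S, monomial m (F.coeff m) with hFhigh
    set Flow : MvPolynomial (Fin 2) ℂ :=
      ∑ m ∈ F.support.filter (fun m => ¬ (2*n - 1 ≤ m.sum fun _ e => e)),
        monomial m (F.coeff m) with hFlow
    have hsplitF : F = Flow + Fhigh := by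
      rw [hFlow, hFhigh, hS, add_comm, Finset.sum_filter_add_sum_filter_not]
      exact F.as_sum
    -- norms of the two pieces
    have hnormsplit : l1mv Flow + l1mv Fhigh ≤ l1mv F := by
      have h1 : l1mv Flow ≤ ∑ m ∈ F.support.filter
          (fun m => ¬ (2*n - 1 ≤ m.sum fun _ e => e)), ‖F.coeff m‖ :=
        le_trans (l1mv_sum_le _ _) (le_of_eq (Finset.sum_congr rfl fun m _ => l1mv_monomial _ _))
      have h2 : l1mv Fhigh ≤ ∑ m ∈ S, ‖F.coeff m‖ :=
        le_trans (l1mv_sum_le _ _) (le_of_eq (Finset.sum_congr rfl fun m _ => l1mv_monomial _ _))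
      have h3 : (∑ m ∈ S, ‖F.coeff m‖) + (∑ m ∈ F.support.filter
          (fun m => ¬ (2*n - 1 ≤ m.sum fun _ e => e)), ‖F.coeff m‖) = l1mv F := by
        rw [hS, Finset.sum_filter_add_sum_filter_not]; rfl
      linarith
    -- degree of Flow
    have hFlowdeg : Flow.totalDegree ≤ 2*n - 2 := by
      refine le_trans (totalDegree_finset_sum _ _) (Finset.sup_le fun m hm => ?_)
      rw [Finset.mem_filter] at hm
      refine le_trans (totalDegree_monomial_le _ _) ?_
      have : (m.sum fun _ e => e) ≤ 2*n - 2 := by omega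
      exact this
    -- support of Fhigh
    have hcoeffFhigh : ∀ m, Fhigh.coeff m = if m ∈ S then F.coeff m else 0 := by
      intro m
      rw [hFhigh, coeff_sum]
      simp only [coeff_monomial]
      rw [Finset.sum_ite_eq' S m (fun m' => F.coeff m')]
    have hFhighsupp : ∀ m ∈ Fhigh.support, 2*n - 1 ≤ m.sum fun _ e => e := by
      intro m hm
      rw [mem_support_iff, hcoeffFhigh] at hm
      by_cases h : m ∈ S
      · exact (Finset.mem_filter.mp h).2
      · simp [h] at hm
    have hFhighdeg : Fhigh.totalDegree ≤ 2*n - 1 + k := by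
      refine totalDegree_le_iff' fun m hm => ?_
      rw [mem_support_iff, hcoeffFhigh] at hm
      by_cases h : m ∈ S
      · have := le_trans (le_totalDegree (Finset.mem_filter.mp h).1) hF
        omega
      · simp [h] at hm
    obtain ⟨U, V, hUV, hUdeg, hVdeg, hUVnorm⟩ := div_high hn hpair hFhighsupp hFhighdeg
    have hUdeg' : U.totalDegree ≤ n - 1 + k := by omega
    have hVdeg' : V.totalDegree ≤ n - 1 + k := by omega
    set F₁ : MvPolynomial (Fin 2) ℂ := Flow + (-(p*U) + -(q*V)) with hF₁
    have hF₁deg : F₁.totalDegree ≤ 2*n - 2 + k := by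
      refine le_trans (totalDegree_add _ _) (max_le (le_trans hFlowdeg (by omega)) ?_)
      refine le_trans (totalDegree_add _ _) (max_le ?_ ?_) <;>
        rw [totalDegree_neg'] <;> refine le_trans (totalDegree_mul _ _) ?_
      · omega
      · omega
    have hF₁norm : l1mv F₁ ≤ l1mv Flow + (n:ℝ) * (l1mv U + l1mv V) := by
      have h1 := l1mv_add_le Flow (-(p*U) + -(q*V))
      have h2 := l1mv_add_le (-(p*U)) (-(q*V))
      rw [l1mv_neg, l1mv_neg] at h2
      have h3 := l1mv_mul_le p U
      have h4 := l1mv_mul_le q V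
      have h5 := l1mv_nonneg U
      have h6 := l1mv_nonneg V
      have h7 := l1mv_nonneg p
      have h8 := l1mv_nonneg q
      nlinarith
    obtain ⟨u₁, v₁, r, hrdeg, heq₁, hnorm₁⟩ := ih F₁ hF₁deg
    clear_value S Fhigh Flow F₁
    refine ⟨u₁ - V, v₁ + U, r, hrdeg, ?_, ?_⟩
    · have : F = F₁ + (P * U + Q * V) := by
        rw [hF₁, hP, hQ]
        conv_lhs => rw [hsplitF, hUV]
        ring
      rw [this, heq₁]; ring
    · -- norm bookkeeping
      have hu : l1mv (u₁ - V) ≤ l1mv u₁ + l1mv V := by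
        have := l1mv_add_le u₁ (-V)
        rw [l1mv_neg] at this
        rw [sub_eq_add_neg]
        exact this
      have hv : l1mv (v₁ + U) ≤ l1mv v₁ + l1mv U := l1mv_add_le _ _
      have hN : (1:ℝ) ≤ (n:ℝ) := by exact_mod_cast hn
      have hpow : (1:ℝ) ≤ ((n:ℝ)+1)^k := one_le_pow₀ (by linarith)
      have hF1n : l1mv F₁ ≤ l1mv Flow + (n:ℝ) * (l1mv U + l1mv V) := hF₁norm
      have hx := l1mv_nonneg Flow
      have hy := l1mv_nonneg Fhigh
      have hUn := l1mv_nonneg U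
      have hVn := l1mv_nonneg V
      have hF1nn := l1mv_nonneg F₁
      have hbound : l1mv u₁ + l1mv v₁ + l1mv r ≤ (2*((n:ℝ)+1)^k - 1) * l1mv F₁ := hnorm₁
      have hCk : (0:ℝ) ≤ 2*((n:ℝ)+1)^k - 1 := by nlinarith
      have step1 : l1mv u₁ + l1mv v₁ + l1mv r ≤
          (2*((n:ℝ)+1)^k - 1) * (l1mv Flow + (n:ℝ) * (l1mv U + l1mv V)) :=
        le_trans hbound (mul_le_mul_of_nonneg_left hF1n hCk)
      have hpowsucc : ((n:ℝ)+1)^(k+1) = ((n:ℝ)+1)^k * ((n:ℝ)+1) := pow_succ _ _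
      have key := real_step hN hpow hx hUn hVn hUVnorm hnormsplit step1
      rw [hpowsucc]
      have goal2 : l1mv (u₁ - V) + l1mv (v₁ + U) + l1mv r ≤
          (l1mv u₁ + l1mv v₁ + l1mv r) + (l1mv U + l1mv V) := by linarith
      linarith [key]

/-- bounded division by `dH` for a balanced Hamiltonian.
If `H` is balanced of degree `n+1`, then every 2-form `Ω = F·dx∧dy` of degree
`≤ 3n` (i.e. `deg F ≤ 3n - 2`) divides as `Ω = dH∧η + Θ`, i.e.
`F = H_x·v − H_y·u + r` with remainder of degree `≤ 2n` (`deg r ≤ 2n - 2`) and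
`‖u‖ + ‖v‖ + ‖r‖ ≤ (n+1)^{n+1}·‖F‖`. -/
theorem stmt5 (n : ℕ) (hn : 1 ≤ n) (H : MvPolynomial (Fin 2) ℂ)
    (hdeg : H.totalDegree = n + 1) (hbal : IsBalanced n H)
    (F : MvPolynomial (Fin 2) ℂ) (hF : F.totalDegree ≤ 3 * n - 2) :
    ∃ u v r : MvPolynomial (Fin 2) ℂ,
      r.totalDegree ≤ 2 * n - 2 ∧
      F = pderiv 0 H * v - pderiv 1 H * u + r ∧
      l1mv u + l1mv v + l1mv r ≤ ((n : ℝ) + 1) ^ (n + 1) * l1mv F := by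
  obtain ⟨hquasi, hnorm1⟩ := hbal
  set Htop := homogeneousComponent (n+1) H with hHtop
  set h := H - Htop with hh
  have hHsplit : H = Htop + h := by rw [hh]; ring
  have hhdeg : h.totalDegree ≤ n := by
    refine totalDegree_le_iff' fun m hm => ?_
    rw [mem_support_iff] at hm
    have hcoeff : h.coeff m = H.coeff m - (if m.degree = n+1 then H.coeff m else 0) := by
      rw [hh, coeff_sub, hHtop, coeff_homogeneousComponent]
    have hds : m.degree = m.sum fun _ e => e := by rw [fin2_degree, fin2_sum]
    by_cases hd : m.degree = n+1
    · rw [hcoeff, if_pos hd] at hm; simp at hm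
    · have hmH : m ∈ H.support := by
        rw [mem_support_iff]
        rw [hcoeff, if_neg hd] at hm
        simpa using hm
      have := le_totalDegree hmH
      rw [hdeg] at this
      omega
  have hP : pderiv 0 H = pderiv 0 Htop + pderiv 0 h := by
    conv_lhs => rw [hHsplit]
    rw [map_add]
  have hQ : pderiv 1 H = pderiv 1 Htop + pderiv 1 h := by
    conv_lhs => rw [hHsplit]
    rw [map_add]
  have hN : (1:ℝ) ≤ (n:ℝ) := by exact_mod_cast hn
  have hpd : (pderiv (0 : Fin 2) h).totalDegree ≤ n - 1 := totalDegree_pderiv_le hhdeg 0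
  have hqd : (pderiv (1 : Fin 2) h).totalDegree ≤ n - 1 := totalDegree_pderiv_le hhdeg 1
  have hpn : l1mv (pderiv (0 : Fin 2) h) ≤ (n:ℝ) := by
    refine le_trans (l1mv_pderiv_le hhdeg 0) ?_
    nlinarith [l1mv_nonneg h]
  have hqn : l1mv (pderiv (1 : Fin 2) h) ≤ (n:ℝ) := by
    refine le_trans (l1mv_pderiv_le hhdeg 1) ?_
    nlinarith [l1mv_nonneg h]
  obtain ⟨u, v, r, hr, heq, hb⟩ :=
    main_ind hn hquasi hP hQ hpd hqd hpn hqn n F (by omega)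
  refine ⟨u, v, r, hr, heq, le_trans hb ?_⟩
  have hpow : (1:ℝ) ≤ ((n:ℝ)+1)^n := one_le_pow₀ (by linarith)
  have hpows : ((n:ℝ)+1)^(n+1) = ((n:ℝ)+1)^n * ((n:ℝ)+1) := pow_succ _ _
  have hc : 2*((n:ℝ)+1)^n - 1 ≤ ((n:ℝ)+1)^(n+1) := by
    rw [hpows]; nlinarith
  exact mul_le_mul_of_nonneg_right hc (l1mv_nonneg F)
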